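/- There exists an LTAG₀ grammar (with adjunction nodes restricted to the path from the lexical leaf to the root) generating the counting-dependency language { aⁿ bⁿ cⁿ : n ≥ 1 }. -/

import Mathlib

/-- Node labels of LTAG₀ trees: terminals, substitution leaves A↓, substitution
nonterminals, adjunction-marked nodes (T), unmarked adjunction nonterminals and
foot nodes T*. -/
inductive Lab (T NS NA : Type) where
  | term : T → Lab T NS NA        -- terminal leaf
  | substLeaf : NS → Lab T NS NA  -- A↓, awaiting substitution
  | nonterm : NS → Lab T NS NA    -- substitution nonterminal (root/internal)
  | adj : NA → Lab T NS NA        -- (T), adjunction allowed here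
  | anode : NA → Lab T NS NA      -- adjunction nonterminal, no adjunction mark
  | foot : NA → Lab T NS NA       -- T*, foot node of an auxiliary tree

/-- Finitely branching labelled trees. -/
inductive LTree (T NS NA : Type) where
  | node : Lab T NS NA → List (LTree T NS NA) → LTree T NS NA

namespace LTree

variable {T NS NA : Type}

def rootLabel : LTree T NS NA → Lab T NS NA
  | .node l _ => l

mutual
  /-- The yield of a tree: the sequence of terminals at its leaves. -/
  def yield : LTree T NS NA → List T
    | .node (.term a) _ => [a]
    | .node (.substLeaf _) cs => yields cs
    | .node (.nonterm _) cs => yields cs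
    | .node (.adj _) cs => yields cs
    | .node (.anode _) cs => yields cs
    | .node (.foot _) cs => yields cs
  def yields : List (LTree T NS NA) → List T
    | [] => []
    | t :: ts => yield t ++ yields ts
end

mutual
  /-- The number of terminal leaves of a tree. -/
  def termCount : LTree T NS NA → ℕ
    | .node (.term _) _ => 1
    | .node (.substLeaf _) cs => termCounts cs
    | .node (.nonterm _) cs => termCounts cs
    | .node (.adj _) cs => termCounts cs
    | .node (.anode _) cs => termCounts cs
    | .node (.foot _) cs => termCounts cs
  def termCounts : List (LTree T NS NA) → ℕ
    | [] => 0
    | t :: ts => termCount t + termCounts ts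
end

mutual
  /-- The number of foot nodes of a tree. -/
  def footCount : LTree T NS NA → ℕ
    | .node (.foot _) cs => 1 + footCounts cs
    | .node (.term _) cs => footCounts cs
    | .node (.substLeaf _) cs => footCounts cs
    | .node (.nonterm _) cs => footCounts cs
    | .node (.adj _) cs => footCounts cs
    | .node (.anode _) cs => footCounts cs
  def footCounts : List (LTree T NS NA) → ℕ
    | [] => 0
    | t :: ts => footCount t + footCounts ts
end

mutual
  /-- A tree is complete when all of its leaves are terminal leaves. -/
  def Complete : LTree T NS NA → Prop
    | .node (.term _) cs => cs = []
    | .node (.substLeaf _) _ => False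
    | .node (.foot _) _ => False
    | .node (.nonterm _) cs => cs ≠ [] ∧ CompleteList cs
    | .node (.adj _) cs => cs ≠ [] ∧ CompleteList cs
    | .node (.anode _) cs => cs ≠ [] ∧ CompleteList cs
  def CompleteList : List (LTree T NS NA) → Prop
    | [] => True
    | t :: ts => Complete t ∧ CompleteList ts
end

/-- The subtree relation. -/
inductive Subtree : LTree T NS NA → LTree T NS NA → Prop
  | refl (t : LTree T NS NA) : Subtree t t
  | child {s u : LTree T NS NA} (l : Lab T NS NA) (cs : List (LTree T NS NA)) :
      u ∈ cs → Subtree s u → Subtree s (.node l cs)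

/-- Substitution of the tree β (with root label `nonterm A`) for one
substitution leaf A↓. -/
inductive ReplaceSubst (β : LTree T NS NA) (A : NS) :
    LTree T NS NA → LTree T NS NA → Prop
  | here : rootLabel β = .nonterm A → ReplaceSubst β A (.node (.substLeaf A) []) β
  | step (l : Lab T NS NA) (pre post : List (LTree T NS NA)) {t t' : LTree T NS NA} :
      ReplaceSubst β A t t' →
      ReplaceSubst β A (.node l (pre ++ t :: post)) (.node l (pre ++ t' :: post))

/-- Replacement of the foot node n* by the tree `sub`. -/
inductive FootReplace (n : NA) (sub : LTree T NS NA) :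
    LTree T NS NA → LTree T NS NA → Prop
  | here : FootReplace n sub (.node (.foot n) []) sub
  | step (l : Lab T NS NA) (pre post : List (LTree T NS NA)) {t t' : LTree T NS NA} :
      FootReplace n sub t t' →
      FootReplace n sub (.node l (pre ++ t :: post)) (.node l (pre ++ t' :: post))

/-- Adjunction of the auxiliary(-derived) tree β (root `anode n`, with a foot
node n*) at one node marked (n): the marked node is replaced by β, and the
original subtree below the node is spliced in at the foot of β. -/
inductive Adjoin (β : LTree T NS NA) : LTree T NS NA → LTree T NS NA → Prop
  | here (n : NA) (cs : List (LTree T NS NA)) {β' : LTree T NS NA} :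
      rootLabel β = .anode n →
      FootReplace n (.node (.anode n) cs) β β' →
      Adjoin β (.node (.adj n) cs) β'
  | step (l : Lab T NS NA) (pre post : List (LTree T NS NA)) {t t' : LTree T NS NA} :
      Adjoin β t t' →
      Adjoin β (.node l (pre ++ t :: post)) (.node l (pre ++ t' :: post))

end LTree

/-- An LTAG₀ grammar: a start symbol, initial trees and auxiliary trees. -/
structure LTAG0 (T NS NA : Type) where
  start : NS
  initial : Set (LTree T NS NA)
  auxTrees : Set (LTree T NS NA)

namespace LTAG0

variable {T NS NA : Type} (g : LTAG0 T NS NA)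

/-- Well-formedness of an LTAG₀ grammar: finitely many elementary trees; every
elementary tree has exactly one terminal leaf; initial trees are rooted in
substitution nonterminals and have no foot node; every auxiliary tree is rooted
in an adjunction nonterminal and has exactly one foot node, labelled by the
same adjunction nonterminal as its root; and every adjunction node lies on the
path from the terminal leaf to the root (i.e. every subtree rooted at an
adjunction mark contains the terminal leaf). -/
def WellFormed : Prop :=
  g.initial.Finite ∧ g.auxTrees.Finite ∧
  (∀ t ∈ g.initial ∪ g.auxTrees, LTree.termCount t = 1) ∧
  (∀ t ∈ g.initial, (∃ A : NS, LTree.rootLabel t = .nonterm A) ∧ LTree.footCount t = 0) ∧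
  (∀ t ∈ g.auxTrees, ∃ n : NA, LTree.rootLabel t = .anode n ∧ LTree.footCount t = 1 ∧
      ∀ u, LTree.Subtree u t → ∀ m : NA, LTree.rootLabel u = .foot m → m = n) ∧
  (∀ t ∈ g.initial ∪ g.auxTrees, ∀ u, LTree.Subtree u t →
      (∃ n : NA, LTree.rootLabel u = .adj n) → 1 ≤ LTree.termCount u)

/-- Derived trees: elementary trees closed under substitution and adjunction. -/
inductive Derived : LTree T NS NA → Prop
  | init {t} : t ∈ g.initial → Derived t
  | auxMem {t} : t ∈ g.auxTrees → Derived t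
  | subst {t β t'} (A : NS) : Derived t → Derived β →
      LTree.ReplaceSubst β A t t' → Derived t'
  | adjoin {t β t'} : Derived t → Derived β →
      LTree.Adjoin β t t' → Derived t'

/-- The language generated by an LTAG₀ grammar: the yields of complete derived
trees rooted in the start symbol. -/
def language : Set (List T) :=
  {w | ∃ t, g.Derived t ∧ LTree.rootLabel t = .nonterm g.start ∧
        LTree.Complete t ∧ LTree.yield t = w}

end LTAG0

/-!
The grammar has the initial trees `α = S(A↓, T(b), C↓)`, `α_A = A(a)`, `α_C = C(c)` and the
auxiliary tree `β = T(A↓, T(T*, b), C↓)`, the inner `T` node being the only adjunction node of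
`α` and of `β`. Adjoining `β` (with its substitution leaves filled) at the adjunction node adds
one `a`, one `b` and one `c`, which gives every `aⁿbⁿcⁿ`.

Conversely, every derived tree is `α_A`, `α_C`, or an `S` or `T` root over layers `T(x, _, y)`,
with `x ∈ {A↓, α_A}` and `y ∈ {C↓, α_C}`, wrapped around a single adjunction node whose chain of
`b`s grows with the number of layers (`Shape`, `Middle`). This shape is preserved by substitution
and adjunction, and in a complete tree all `x` are `α_A` and all `y` are `α_C`, so its yield is
`aⁿbⁿcⁿ`.
-/

namespace LTree

variable {T NS NA : Type}

theorem forall_subtree_node {P : LTree T NS NA → Prop} {l : Lab T NS NA}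
    {cs : List (LTree T NS NA)} :
    (∀ u, Subtree u (.node l cs) → P u) ↔
      P (.node l cs) ∧ ∀ c ∈ cs, ∀ u, Subtree u c → P u := by
  refine ⟨fun h => ⟨h _ (.refl _), fun c hc u hu => h u (.child l cs hc hu)⟩, ?_⟩
  rintro ⟨hroot, hcs⟩ u hu
  cases hu with
  | refl => exact hroot
  | child _ _ hc hu => exact hcs _ hc u hu

def AllLabels (p : Lab T NS NA → Prop) (t : LTree T NS NA) : Prop :=
  ∀ u, Subtree u t → p (rootLabel u)

theorem allLabels_node {p : Lab T NS NA → Prop} {l : Lab T NS NA}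
    {cs : List (LTree T NS NA)} :
    AllLabels p (.node l cs) ↔ p l ∧ ∀ c ∈ cs, AllLabels p c :=
  forall_subtree_node

theorem completeList_iff {cs : List (LTree T NS NA)} :
    CompleteList cs ↔ ∀ c ∈ cs, Complete c := by
  induction cs with
  | nil => simp [CompleteList]
  | cons c cs ih => simp [CompleteList, ih]

theorem ReplaceSubst.inv_node {β : LTree T NS NA} {A : NS} {l : Lab T NS NA}
    {cs : List (LTree T NS NA)} {t' : LTree T NS NA} (h : ReplaceSubst β A (.node l cs) t') :
    (l = .substLeaf A ∧ cs = [] ∧ rootLabel β = .nonterm A ∧ t' = β) ∨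
      ∃ pre u post u', cs = pre ++ u :: post ∧ ReplaceSubst β A u u' ∧
        t' = .node l (pre ++ u' :: post) := by
  cases h with
  | here h => exact .inl ⟨rfl, rfl, h, rfl⟩
  | step l pre post h => exact .inr ⟨pre, _, post, _, rfl, h, rfl⟩

theorem FootReplace.inv_node {n : NA} {s : LTree T NS NA} {l : Lab T NS NA}
    {cs : List (LTree T NS NA)} {t' : LTree T NS NA} (h : FootReplace n s (.node l cs) t') :
    (l = .foot n ∧ cs = [] ∧ t' = s) ∨
      ∃ pre u post u', cs = pre ++ u :: post ∧ FootReplace n s u u' ∧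
        t' = .node l (pre ++ u' :: post) := by
  cases h with
  | here => exact .inl ⟨rfl, rfl, rfl⟩
  | step l pre post h => exact .inr ⟨pre, _, post, _, rfl, h, rfl⟩

theorem Adjoin.inv_node {β : LTree T NS NA} {l : Lab T NS NA} {cs : List (LTree T NS NA)}
    {t' : LTree T NS NA} (h : Adjoin β (.node l cs) t') :
    (∃ n, l = .adj n ∧ rootLabel β = .anode n ∧
        FootReplace n (.node (.anode n) cs) β t') ∨
      ∃ pre u post u', cs = pre ++ u :: post ∧ Adjoin β u u' ∧
        t' = .node l (pre ++ u' :: post) := by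
  cases h with
  | here n cs h hf => exact .inl ⟨n, rfl, h, hf⟩
  | step l pre post h => exact .inr ⟨pre, _, post, _, rfl, h, rfl⟩

theorem ReplaceSubst.not_of_allLabels {β t t' : LTree T NS NA} {A : NS}
    (ht : AllLabels (· ≠ .substLeaf A) t) : ¬ ReplaceSubst β A t t' := by
  intro h
  induction h with
  | here _ => exact (allLabels_node.1 ht).1 rfl
  | step l pre post _ ih => exact ih ((allLabels_node.1 ht).2 _ List.mem_append_cons_self)

theorem FootReplace.not_of_allLabels {s t t' : LTree T NS NA} {n : NA}
    (ht : AllLabels (· ≠ .foot n) t) : ¬ FootReplace n s t t' := by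
  intro h
  induction h with
  | here => exact (allLabels_node.1 ht).1 rfl
  | step l pre post _ ih => exact ih ((allLabels_node.1 ht).2 _ List.mem_append_cons_self)

theorem Adjoin.not_of_allLabels {β t t' : LTree T NS NA}
    (ht : AllLabels (∀ n, · ≠ .adj n) t) : ¬ Adjoin β t t' := by
  intro h
  induction h with
  | here n _ _ _ => exact (allLabels_node.1 ht).1 n rfl
  | step l pre post _ ih => exact ih ((allLabels_node.1 ht).2 _ List.mem_append_cons_self)

theorem ReplaceSubst.inv_triple {β x m y t' : LTree T NS NA} {A : NS} {l : Lab T NS NA}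
    (h : ReplaceSubst β A (.node l [x, m, y]) t') :
    (∃ x', ReplaceSubst β A x x' ∧ t' = .node l [x', m, y]) ∨
      (∃ m', ReplaceSubst β A m m' ∧ t' = .node l [x, m', y]) ∨
      (∃ y', ReplaceSubst β A y y' ∧ t' = .node l [x, m, y']) := by
  rcases h.inv_node with ⟨-, h, -⟩ | ⟨pre, u, post, u', hcs, hu, rfl⟩
  · simp at h
  · rcases pre with _ | ⟨a, _ | ⟨b, _ | ⟨c, pre⟩⟩⟩ <;> simp_all

theorem FootReplace.inv_triple {n : NA} {s x m y t' : LTree T NS NA} {l : Lab T NS NA}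
    (h : FootReplace n s (.node l [x, m, y]) t') :
    (∃ x', FootReplace n s x x' ∧ t' = .node l [x', m, y]) ∨
      (∃ m', FootReplace n s m m' ∧ t' = .node l [x, m', y]) ∨
      (∃ y', FootReplace n s y y' ∧ t' = .node l [x, m, y']) := by
  rcases h.inv_node with ⟨-, h, -⟩ | ⟨pre, u, post, u', hcs, hu, rfl⟩
  · simp at h
  · rcases pre with _ | ⟨a, _ | ⟨b, _ | ⟨c, pre⟩⟩⟩ <;> simp_all

theorem FootReplace.inv_pair {n : NA} {s u v t' : LTree T NS NA} {l : Lab T NS NA}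
    (h : FootReplace n s (.node l [u, v]) t') :
    (∃ u', FootReplace n s u u' ∧ t' = .node l [u', v]) ∨
      (∃ v', FootReplace n s v v' ∧ t' = .node l [u, v']) := by
  rcases h.inv_node with ⟨-, h, -⟩ | ⟨pre, u, post, u', hcs, hu, rfl⟩
  · simp at h
  · rcases pre with _ | ⟨a, _ | ⟨b, pre⟩⟩ <;> simp_all

theorem Adjoin.inv_triple {β x m y t' : LTree T NS NA} {l : Lab T NS NA}
    (hl : ∀ n, l ≠ .adj n) (h : Adjoin β (.node l [x, m, y]) t') :
    (∃ x', Adjoin β x x' ∧ t' = .node l [x', m, y]) ∨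
      (∃ m', Adjoin β m m' ∧ t' = .node l [x, m', y]) ∨
      (∃ y', Adjoin β y y' ∧ t' = .node l [x, m, y']) := by
  rcases h.inv_node with ⟨n, h, -⟩ | ⟨pre, u, post, u', hcs, hu, rfl⟩
  · exact absurd h (hl n)
  · rcases pre with _ | ⟨a, _ | ⟨b, _ | ⟨c, pre⟩⟩⟩ <;> simp_all

end LTree

namespace Counting

open LTree

inductive Nt
  | S
  | A
  | C

abbrev Tree := LTree (Fin 3) Nt Unit

def leaf (a : Fin 3) : Tree := .node (.term a) []
def substA : Tree := .node (.substLeaf .A) []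
def substC : Tree := .node (.substLeaf .C) []
def foot : Tree := .node (.foot ()) []

def alphaS : Tree := .node (.nonterm .S) [substA, .node (.adj ()) [leaf 1], substC]
def alphaA : Tree := .node (.nonterm .A) [leaf 0]
def alphaC : Tree := .node (.nonterm .C) [leaf 2]
def beta : Tree := .node (.anode ()) [substA, .node (.adj ()) [foot, leaf 1], substC]

def grammar : LTAG0 (Fin 3) Nt Unit where
  start := .S
  initial := {alphaS, alphaA, alphaC}
  auxTrees := {beta}

theorem grammar_wellFormed : grammar.WellFormed := by
  refine ⟨Set.toFinite {alphaS, alphaA, alphaC}, Set.finite_singleton beta, ?_, ?_, ?_, ?_⟩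
  · simp only [grammar, Set.mem_union, Set.mem_insert_iff, Set.mem_singleton_iff]
    rintro t ((rfl | rfl | rfl) | rfl) <;>
      simp [termCount, termCounts, alphaS, alphaA, alphaC, beta, leaf, substA, substC, foot]
  · simp only [grammar, Set.mem_insert_iff, Set.mem_singleton_iff]
    rintro t (rfl | rfl | rfl) <;>
      simp [rootLabel, footCount, footCounts, alphaS, alphaA, alphaC, leaf, substA, substC]
  · simp only [grammar, Set.mem_singleton_iff]
    rintro t rfl
    exact ⟨(), rfl, by simp [footCount, footCounts, beta, leaf, substA, substC, foot], by simp⟩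
  · simp only [grammar, Set.mem_union, Set.mem_insert_iff, Set.mem_singleton_iff]
    rintro t ((rfl | rfl | rfl) | rfl) <;>
      simp [forall_subtree_node, rootLabel, termCount, termCounts, alphaS, alphaA, alphaC, beta,
        leaf, substA, substC, foot]

def spine (bot : List Tree) : ℕ → List Tree
  | 0 => bot
  | k + 1 => [.node (.anode ()) (spine bot k), leaf 1]

def adjSite (bot : List Tree) (k : ℕ) : Tree := .node (.adj ()) (spine bot k)

def IsA (x : Tree) : Prop := x = substA ∨ x = alphaA

def IsC (y : Tree) : Prop := y = substC ∨ y = alphaC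

/-- `Middle bot k m`: `m` consists of `d` layers `T[x, _, y]` around `adjSite bot (k + d)`. -/
inductive Middle (bot : List Tree) : ℕ → Tree → Prop
  | site (k : ℕ) : Middle bot k (adjSite bot k)
  | wrap {k : ℕ} {x m y : Tree} : IsA x → Middle bot (k + 1) m → IsC y →
      Middle bot k (.node (.anode ()) [x, m, y])

inductive Shape : Tree → Prop
  | isAlphaA : Shape alphaA
  | isAlphaC : Shape alphaC
  | aux {x m y : Tree} : IsA x → Middle [foot, leaf 1] 0 m → IsC y →
      Shape (.node (.anode ()) [x, m, y])
  | start {x m y : Tree} : IsA x → Middle [leaf 1] 0 m → IsC y →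
      Shape (.node (.nonterm .S) [x, m, y])

theorem allLabels_spine {p : Lab (Fin 3) Nt Unit → Prop} (hanode : p (.anode ()))
    (hb : p (.term 1)) {bot : List Tree} (hbot : ∀ c ∈ bot, AllLabels p c) :
    ∀ k, ∀ c ∈ spine bot k, AllLabels p c
  | 0 => hbot
  | k + 1 => by
    simpa [spine, allLabels_node, hanode, hb, leaf] using allLabels_spine hanode hb hbot k

theorem IsA.allLabels {p : Lab (Fin 3) Nt Unit → Prop} {x : Tree} (hx : IsA x)
    (hsubst : p (.substLeaf .A)) (hroot : p (.nonterm .A)) (ha : p (.term 0)) :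
    AllLabels p x := by
  rcases hx with rfl | rfl <;> simp [substA, alphaA, leaf, allLabels_node, *]

theorem IsC.allLabels {p : Lab (Fin 3) Nt Unit → Prop} {y : Tree} (hy : IsC y)
    (hsubst : p (.substLeaf .C)) (hroot : p (.nonterm .C)) (hc : p (.term 2)) :
    AllLabels p y := by
  rcases hy with rfl | rfl <;> simp [substC, alphaC, leaf, allLabels_node, *]

theorem Shape.eq_alphaA {β : Tree} (hβ : Shape β) (hroot : rootLabel β = .nonterm .A) :
    β = alphaA := by
  cases hβ <;> simp_all [rootLabel, alphaC]

theorem Shape.eq_alphaC {β : Tree} (hβ : Shape β) (hroot : rootLabel β = .nonterm .C) :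
    β = alphaC := by
  cases hβ <;> simp_all [rootLabel, alphaA]

theorem Shape.exists_of_rootLabel_anode {β : Tree} {n : Unit} (hβ : Shape β)
    (hroot : rootLabel β = .anode n) : ∃ x m y, IsA x ∧ Middle [foot, leaf 1] 0 m ∧ IsC y ∧
      β = .node (.anode ()) [x, m, y] := by
  cases hβ <;> simp_all [rootLabel, alphaA, alphaC]

theorem IsA.not_footReplace {x x' s : Tree} (hx : IsA x) : ¬ FootReplace () s x x' :=
  FootReplace.not_of_allLabels (hx.allLabels (by simp) (by simp) (by simp))

theorem IsC.not_footReplace {y y' s : Tree} (hy : IsC y) : ¬ FootReplace () s y y' :=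
  FootReplace.not_of_allLabels (hy.allLabels (by simp) (by simp) (by simp))

theorem IsA.not_adjoin {x x' β : Tree} (hx : IsA x) : ¬ Adjoin β x x' :=
  Adjoin.not_of_allLabels (hx.allLabels (by simp) (by simp) (by simp))

theorem IsC.not_adjoin {y y' β : Tree} (hy : IsC y) : ¬ Adjoin β y y' :=
  Adjoin.not_of_allLabels (hy.allLabels (by simp) (by simp) (by simp))

theorem IsA.replaceSubst {β x x' : Tree} {B : Nt} (hβ : Shape β) (hx : IsA x)
    (h : ReplaceSubst β B x x') : IsA x' := by
  rcases hx with rfl | rfl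
  · rcases h.inv_node with ⟨hl, -, hroot, rfl⟩ | ⟨pre, u, post, u', hcs, -, -⟩
    · cases hl
      exact .inr (hβ.eq_alphaA hroot)
    · simp at hcs
  · exact absurd h (ReplaceSubst.not_of_allLabels (by simp [alphaA, leaf, allLabels_node]))

theorem IsC.replaceSubst {β y y' : Tree} {B : Nt} (hβ : Shape β) (hy : IsC y)
    (h : ReplaceSubst β B y y') : IsC y' := by
  rcases hy with rfl | rfl
  · rcases h.inv_node with ⟨hl, -, hroot, rfl⟩ | ⟨pre, u, post, u', hcs, -, -⟩
    · cases hl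
      exact .inr (hβ.eq_alphaC hroot)
    · simp at hcs
  · exact absurd h (ReplaceSubst.not_of_allLabels (by simp [alphaC, leaf, allLabels_node]))

theorem footReplace_spine {s : Tree} : ∀ (k : ℕ) {l : Lab (Fin 3) Nt Unit} {t' : Tree},
    FootReplace () s (.node l (spine [foot, leaf 1] k)) t' →
      t' = .node l (spine [s, leaf 1] k) := by
  have hb : ∀ {t'}, ¬ FootReplace () s (leaf 1) t' :=
    FootReplace.not_of_allLabels (by simp [leaf, allLabels_node])
  intro k
  induction k with
  | zero =>
    intro l t' h
    rcases h.inv_pair with ⟨u', hu, rfl⟩ | ⟨v', hv, -⟩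
    · rcases hu.inv_node with ⟨-, -, rfl⟩ | ⟨pre, u, post, u', hcs, -, -⟩
      · rfl
      · simp at hcs
    · exact absurd hv hb
  | succ k ih =>
    intro l t' h
    rcases h.inv_pair with ⟨u', hu, rfl⟩ | ⟨v', hv, -⟩
    · rw [ih hu]; rfl
    · exact absurd hv hb

theorem spine_cons_spine (bot : List Tree) (j k : ℕ) :
    spine [.node (.anode ()) (spine bot j), leaf 1] k = spine bot (j + 1 + k) := by
  induction k with
  | zero => rfl
  | succ k ih => simp only [spine, ih]; rfl

theorem Middle.footReplace {bot : List Tree} {j : ℕ} :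
    ∀ {k : ℕ} {m m' : Tree}, Middle [foot, leaf 1] k m →
      FootReplace () (.node (.anode ()) (spine bot j)) m m' → Middle bot (j + 1 + k) m' := by
  intro k m m' hm h
  induction hm generalizing m' with
  | site k =>
    rw [footReplace_spine k h, spine_cons_spine]
    exact .site _
  | wrap hx _ hy ih =>
    rcases h.inv_triple with ⟨x', hx', -⟩ | ⟨m', hm', rfl⟩ | ⟨y', hy', -⟩
    · exact absurd hx' hx.not_footReplace
    · exact .wrap hx (ih hm') hy
    · exact absurd hy' hy.not_footReplace

theorem Middle.adjoin {β : Tree} (hβ : Shape β) {bot : List Tree}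
    (hbot : ∀ c ∈ bot, AllLabels (∀ n, · ≠ .adj n) c) :
    ∀ {k : ℕ} {m m' : Tree}, Middle bot k m → Adjoin β m m' → Middle bot k m' := by
  intro k m m' hm h
  induction hm generalizing m' with
  | site k =>
    rcases h.inv_node with ⟨⟨⟩, -, hroot, hfr⟩ | ⟨pre, u, post, u', hcs, hu, -⟩
    · obtain ⟨x, mβ, y, hx, hmβ, hy, rfl⟩ := hβ.exists_of_rootLabel_anode hroot
      rcases hfr.inv_triple with ⟨x', hx', -⟩ | ⟨m', hm', rfl⟩ | ⟨y', hy', -⟩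
      · exact absurd hx' hx.not_footReplace
      · exact .wrap hx (hmβ.footReplace hm') hy
      · exact absurd hy' hy.not_footReplace
    · refine absurd hu (Adjoin.not_of_allLabels ?_)
      exact allLabels_spine (by simp) (by simp) hbot k u (hcs ▸ List.mem_append_cons_self)
  | wrap hx _ hy ih =>
    rcases h.inv_triple (by simp) with ⟨x', hx', -⟩ | ⟨m', hm', rfl⟩ | ⟨y', hy', -⟩
    · exact absurd hx' hx.not_adjoin
    · exact .wrap hx (ih hm') hy
    · exact absurd hy' hy.not_adjoin

theorem Middle.replaceSubst {β : Tree} {B : Nt} (hβ : Shape β) {bot : List Tree}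
    (hbot : ∀ c ∈ bot, AllLabels (· ≠ .substLeaf B) c) :
    ∀ {k : ℕ} {m m' : Tree}, Middle bot k m → ReplaceSubst β B m m' → Middle bot k m' := by
  intro k m m' hm h
  induction hm generalizing m' with
  | site k =>
    refine absurd h (ReplaceSubst.not_of_allLabels ?_)
    exact allLabels_node.2 ⟨by simp, allLabels_spine (by simp) (by simp) hbot k⟩
  | wrap hx _ hy ih =>
    rcases h.inv_triple with ⟨x', hx', rfl⟩ | ⟨m', hm', rfl⟩ | ⟨y', hy', rfl⟩
    · exact .wrap (hx.replaceSubst hβ hx') ‹_› hy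
    · exact .wrap hx (ih hm') hy
    · exact .wrap hx ‹_› (hy.replaceSubst hβ hy')

theorem Shape.replaceSubst {t β t' : Tree} {B : Nt} (ht : Shape t) (hβ : Shape β)
    (h : ReplaceSubst β B t t') : Shape t' := by
  cases ht with
  | isAlphaA =>
    exact absurd h (ReplaceSubst.not_of_allLabels (by simp [alphaA, leaf, allLabels_node]))
  | isAlphaC =>
    exact absurd h (ReplaceSubst.not_of_allLabels (by simp [alphaC, leaf, allLabels_node]))
  | aux hx hm hy =>
    rcases h.inv_triple with ⟨x', hx', rfl⟩ | ⟨m', hm', rfl⟩ | ⟨y', hy', rfl⟩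
    · exact .aux (hx.replaceSubst hβ hx') hm hy
    · exact .aux hx (hm.replaceSubst hβ (by simp [foot, leaf, allLabels_node]) hm') hy
    · exact .aux hx hm (hy.replaceSubst hβ hy')
  | start hx hm hy =>
    rcases h.inv_triple with ⟨x', hx', rfl⟩ | ⟨m', hm', rfl⟩ | ⟨y', hy', rfl⟩
    · exact .start (hx.replaceSubst hβ hx') hm hy
    · exact .start hx (hm.replaceSubst hβ (by simp [leaf, allLabels_node]) hm') hy
    · exact .start hx hm (hy.replaceSubst hβ hy')

theorem Shape.adjoin {t β t' : Tree} (ht : Shape t) (hβ : Shape β) (h : Adjoin β t t') :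
    Shape t' := by
  cases ht with
  | isAlphaA =>
    exact absurd h (Adjoin.not_of_allLabels (by simp [alphaA, leaf, allLabels_node]))
  | isAlphaC =>
    exact absurd h (Adjoin.not_of_allLabels (by simp [alphaC, leaf, allLabels_node]))
  | aux hx hm hy =>
    rcases h.inv_triple (by simp) with ⟨x', hx', -⟩ | ⟨m', hm', rfl⟩ | ⟨y', hy', -⟩
    · exact absurd hx' hx.not_adjoin
    · exact .aux hx (hm.adjoin hβ (by simp [foot, leaf, allLabels_node]) hm') hy
    · exact absurd hy' hy.not_adjoin
  | start hx hm hy =>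
    rcases h.inv_triple (by simp) with ⟨x', hx', -⟩ | ⟨m', hm', rfl⟩ | ⟨y', hy', -⟩
    · exact absurd hx' hx.not_adjoin
    · exact .start hx (hm.adjoin hβ (by simp [leaf, allLabels_node]) hm') hy
    · exact absurd hy' hy.not_adjoin

theorem shape_of_derived {t : Tree} (ht : grammar.Derived t) : Shape t := by
  induction ht with
  | init ht =>
    simp only [grammar, Set.mem_insert_iff, Set.mem_singleton_iff] at ht
    rcases ht with rfl | rfl | rfl
    · exact .start (.inl rfl) (.site 0) (.inl rfl)
    · exact .isAlphaA
    · exact .isAlphaC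
  | auxMem ht =>
    rw [grammar, Set.mem_singleton_iff] at ht
    subst ht
    exact .aux (.inl rfl) (.site 0) (.inl rfl)
  | subst _ _ _ h ht hβ => exact ht.replaceSubst hβ h
  | adjoin _ _ h ht hβ => exact ht.adjoin hβ h

@[simp]
theorem yield_leaf (a : Fin 3) : yield (leaf a) = [a] := by
  simp [leaf, yield]

@[simp]
theorem complete_leaf (a : Fin 3) : Complete (leaf a) := by
  simp [leaf, Complete]

theorem yields_spine (k : ℕ) : yields (spine [leaf 1] k) = List.replicate (k + 1) 1 := by
  induction k with
  | zero => simp [spine, yields]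
  | succ k ih =>
    simp only [spine, yield, yields, ih, yield_leaf, List.append_nil]
    exact (List.replicate_succ' ..).symm

theorem complete_spine : ∀ k, spine [leaf 1] k ≠ [] ∧ ∀ c ∈ spine [leaf 1] k, Complete c
  | 0 => by simp [spine]
  | k + 1 => by simpa [spine, Complete, completeList_iff] using complete_spine k

theorem completeList_wrap {x m y : Tree} (hx : IsA x) (hy : IsC y)
    (hc : CompleteList [x, m, y]) : x = alphaA ∧ Complete m ∧ y = alphaC := by
  simp only [completeList_iff, List.forall_mem_cons] at hc
  obtain ⟨hcx, hcm, hcy, -⟩ := hc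
  refine ⟨?_, hcm, ?_⟩
  · rcases hx with rfl | rfl
    · simp [substA, Complete] at hcx
    · rfl
  · rcases hy with rfl | rfl
    · simp [substC, Complete] at hcy
    · rfl

theorem Middle.yield_eq {k : ℕ} {m : Tree} (hm : Middle [leaf 1] k m) (hc : Complete m) :
    ∃ d, yield m = List.replicate d 0 ++ List.replicate (d + k + 1) 1 ++ List.replicate d 2 := by
  induction hm with
  | site k => exact ⟨0, by simp [adjSite, yield, yields_spine]⟩
  | @wrap k x m y hx hm hy ih =>
    obtain ⟨rfl, hcm, rfl⟩ := completeList_wrap hx hy (by simpa [Complete] using hc)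
    obtain ⟨d, hd⟩ := ih hcm
    refine ⟨d + 1, ?_⟩
    rw [List.replicate_succ (a := (0 : Fin 3)), List.replicate_succ' (a := (2 : Fin 3)),
      show d + 1 + k + 1 = d + (k + 1) + 1 by omega]
    simp [yield, yields, hd, alphaA, alphaC]

theorem language_subset : grammar.language ⊆ {x | ∃ n : ℕ, 1 ≤ n ∧
    x = List.replicate n (0 : Fin 3) ++ List.replicate n 1 ++ List.replicate n 2} := by
  rintro _ ⟨t, ht, hroot, hc, rfl⟩
  cases shape_of_derived ht with
  | isAlphaA => simp [alphaA, rootLabel, grammar] at hroot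
  | isAlphaC => simp [alphaC, rootLabel, grammar] at hroot
  | aux => simp [rootLabel, grammar] at hroot
  | @start x m y hx hm hy =>
    obtain ⟨rfl, hcm, rfl⟩ := completeList_wrap hx hy (by simpa [Complete] using hc)
    obtain ⟨d, hd⟩ := hm.yield_eq hcm
    refine ⟨d + 1, by omega, ?_⟩
    rw [List.replicate_succ (a := (0 : Fin 3)), List.replicate_succ' (a := (2 : Fin 3))]
    simp [yield, yields, hd, alphaA, alphaC]

def wrapAC (t : Tree) : Tree := .node (.anode ()) [alphaA, t, alphaC]

def abcTree (d : ℕ) : Tree :=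
  .node (.nonterm .S) [alphaA, wrapAC^[d] (adjSite [leaf 1] d), alphaC]

theorem derived_fill_AC {l : Lab (Fin 3) Nt Unit} {m : Tree}
    (h : grammar.Derived (.node l [substA, m, substC])) :
    grammar.Derived (.node l [alphaA, m, alphaC]) := by
  have hA : grammar.Derived alphaA := .init (by simp [grammar])
  have hC : grammar.Derived alphaC := .init (by simp [grammar])
  exact .subst .C (.subst .A h hA (.step l [] [m, substC] (.here rfl))) hC
    (.step l [alphaA, m] [] (.here rfl))

theorem adjoin_iterate_wrapAC {β u u' : Tree} (h : Adjoin β u u') (w : ℕ) :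
    Adjoin β (wrapAC^[w] u) (wrapAC^[w] u') := by
  induction w with
  | zero => exact h
  | succ w ih =>
    rw [Function.iterate_succ_apply', Function.iterate_succ_apply']
    exact .step _ [alphaA] [alphaC] ih

theorem derived_abcTree (d : ℕ) : grammar.Derived (abcTree d) := by
  induction d with
  | zero => exact derived_fill_AC (.init (Set.mem_insert alphaS _))
  | succ d ih =>
    have hβ : grammar.Derived (wrapAC (adjSite [foot, leaf 1] 0)) :=
      derived_fill_AC (.auxMem (Set.mem_singleton beta))
    have hsite : Adjoin (wrapAC (adjSite [foot, leaf 1] 0)) (adjSite [leaf 1] d)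
        (wrapAC (adjSite [leaf 1] (d + 1))) :=
      .here () _ rfl (.step _ [alphaA] [alphaC] (.step _ [] [leaf 1] .here))
    refine .adjoin ih hβ (.step _ [alphaA] [alphaC] ?_)
    rw [Function.iterate_succ_apply]
    exact adjoin_iterate_wrapAC hsite d

theorem complete_iterate_wrapAC {u : Tree} (hu : Complete u) (w : ℕ) :
    Complete (wrapAC^[w] u) := by
  induction w with
  | zero => exact hu
  | succ w ih =>
    rw [Function.iterate_succ_apply']
    simp [wrapAC, Complete, CompleteList, ih, alphaA, alphaC]

theorem yield_iterate_wrapAC (u : Tree) (w : ℕ) :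
    yield (wrapAC^[w] u) = List.replicate w 0 ++ yield u ++ List.replicate w 2 := by
  induction w with
  | zero => simp
  | succ w ih =>
    rw [Function.iterate_succ_apply', List.replicate_succ, List.replicate_succ']
    simp [wrapAC, yield, yields, ih, alphaA, alphaC]

theorem complete_adjSite (d : ℕ) : Complete (adjSite [leaf 1] d) := by
  simpa [adjSite, Complete, completeList_iff] using complete_spine d

theorem complete_abcTree (d : ℕ) : Complete (abcTree d) := by
  simp [abcTree, Complete, CompleteList, alphaA, alphaC,
    complete_iterate_wrapAC (complete_adjSite d)]

theorem yield_abcTree (d : ℕ) : yield (abcTree d) =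
    List.replicate (d + 1) 0 ++ List.replicate (d + 1) 1 ++ List.replicate (d + 1) 2 := by
  rw [List.replicate_succ (a := (0 : Fin 3)), List.replicate_succ' (a := (2 : Fin 3))]
  simp [abcTree, yield, yields, yield_iterate_wrapAC, adjSite, yields_spine, alphaA, alphaC]

theorem subset_language : {x | ∃ n : ℕ, 1 ≤ n ∧
    x = List.replicate n (0 : Fin 3) ++ List.replicate n 1 ++ List.replicate n 2} ⊆
      grammar.language := by
  rintro _ ⟨n, hn, rfl⟩
  obtain ⟨d, rfl⟩ := Nat.exists_eq_add_of_le' hn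
  exact ⟨abcTree d, derived_abcTree d, rfl, complete_abcTree d, yield_abcTree d⟩

end Counting

/-- There exists a well-formed LTAG₀ grammar (with adjunction nodes restricted
to the path from the lexical leaf to the root) generating the
counting-dependency language { aⁿ bⁿ cⁿ : n ≥ 1 }. -/
theorem exists_ltag0_counting :
    ∃ (NS NA : Type) (g : LTAG0 (Fin 3) NS NA), g.WellFormed ∧
      g.language = {x | ∃ n : ℕ, 1 ≤ n ∧
        x = List.replicate n (0 : Fin 3) ++ List.replicate n 1 ++ List.replicate n 2} :=
  ⟨Counting.Nt, Unit, Counting.grammar, Counting.grammar_wellFormed,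
    Counting.language_subset.antisymm Counting.subset_language⟩
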